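/- (Completeness via logic programming) If ⊩ φ (φ is supported in every base of the Sandqvist basis), then ⊢ φ in NJ. The proof factors as: ⊩ φ implies ⊩_N φ implies T^ω I_⊥, N ⊨ φ^♭ implies N ⊢ φ^♭ (operationally) implies ⊢ φ. -/

import Mathlib

/-! ## hereditary Harrop fragment -/

inductive Atm : Type
  | bot : Atm
  | at_ : ℕ → Atm

mutual
  inductive Df : Type
    | atom : Atm → Df
    | imp : Gf → Atm → Df
    | and : Df → Df → Df
  inductive Gf : Type
    | atom : Atm → Gf
    | dimp : Df → Gf → Gf
    | and : Gf → Gf → Gf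
    | or : Gf → Gf → Gf
end

noncomputable instance : DecidableEq Df := Classical.decEq _
noncomputable instance : DecidableEq Atm := Classical.decEq _

/-- A program is a finite set of definite formulae. -/
abbrev Program := Finset Df

/-- `[P]` : closure of a program under decomposing conjunctions. -/
inductive InClos (P : Program) : Df → Prop
  | mem {d} : d ∈ P → InClos P d
  | andl {d₁ d₂} : InClos P (Df.and d₁ d₂) → InClos P d₁
  | andr {d₁ d₂} : InClos P (Df.and d₁ d₂) → InClos P d₂

/-- An interpretation: a monotone map from programs to sets of atoms. -/
structure Interp where
  val : Program → Set Atm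
  mono : ∀ {P Q : Program}, P ⊆ Q → val P ⊆ val Q

/-- Pointwise order on interpretations. -/
def Interp.le (I J : Interp) : Prop := ∀ P, I.val P ⊆ J.val P

/-- Satisfaction `I, P ⊨ G`. -/
def sat (I : Interp) : Program → Gf → Prop
  | P, Gf.atom a => a ∈ I.val P
  | P, Gf.dimp d g => sat I (insert d P) g
  | P, Gf.and g₁ g₂ => sat I P g₁ ∧ sat I P g₂
  | P, Gf.or g₁ g₂ => sat I P g₁ ∨ sat I P g₂

theorem InClos.mono' {P Q : Program} (h : P ⊆ Q) : ∀ {d}, InClos P d → InClos Q d := by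
  intro d hd
  induction hd with
  | mem hm => exact InClos.mem (h hm)
  | andl _ ih => exact InClos.andl ih
  | andr _ ih => exact InClos.andr ih

theorem sat_mono (I : Interp) : ∀ (g : Gf) {P Q : Program}, P ⊆ Q → sat I P g → sat I Q g
  | Gf.atom _, _, _, h, hs => I.mono h hs
  | Gf.dimp d g, _, _, h, hs => sat_mono I g (Finset.insert_subset_insert d h) hs
  | Gf.and g₁ g₂, _, _, h, hs => ⟨sat_mono I g₁ h hs.1, sat_mono I g₂ h hs.2⟩
  | Gf.or g₁ g₂, _, _, h, hs =>
      hs.elim (fun x => Or.inl (sat_mono I g₁ h x)) (fun x => Or.inr (sat_mono I g₂ h x))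

/-- The raw unfolding operator. -/
def Traw (I : Interp) (P : Program) : Set Atm :=
  {a | InClos P (Df.atom a)} ∪
  {a | ∃ g, InClos P (Df.imp g a) ∧ sat I P g} ∪
  {a | sat I P (Gf.atom Atm.bot)}

/-- `T` maps interpretations to interpretations. -/
def T (I : Interp) : Interp := by
  refine ⟨Traw I, ?_⟩
  intro P Q h a ha
  simp only [Traw, Set.mem_union, Set.mem_setOf_eq] at ha ⊢
  rcases ha with (h1 | ⟨g, hg, hs⟩) | h3
  · exact Or.inl (Or.inl (InClos.mono' h h1))
  · exact Or.inl (Or.inr ⟨g, InClos.mono' h hg, sat_mono I _ h hs⟩)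
  · exact Or.inr (sat_mono I _ h h3)

/-- The bottom interpretation. -/
def Ibot : Interp := ⟨fun _ => ∅, fun _ => Set.Subset.refl _⟩

/-- Iterates of `T` from the bottom interpretation. -/
def Tn : ℕ → Interp
  | 0 => Ibot
  | n + 1 => T (Tn n)

/-- `T^ω I_⊥`, the least fixed point of `T`. -/
def Tomega : Interp :=
  ⟨fun P => ⋃ n, (Tn n).val P, fun h => Set.iUnion_mono fun n => (Tn n).mono h⟩

/-- The pointwise supremum of a family of interpretations. -/
def chainSup (I : ℕ → Interp) : Interp :=
  ⟨fun P => ⋃ n, (I n).val P, fun h => Set.iUnion_mono fun n => (I n).mono h⟩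

/-- Operational semantics for hHLP. -/
inductive Exec : Program → Gf → Prop
  | inn {P a} : InClos P (Df.atom a) → Exec P (Gf.atom a)
  | clause {P g a} : InClos P (Df.imp g a) → Exec P g → Exec P (Gf.atom a)
  | efq {P g} : Exec P (Gf.atom Atm.bot) → Exec P g
  | orl {P g₁ g₂} : Exec P g₁ → Exec P (Gf.or g₁ g₂)
  | orr {P g₁ g₂} : Exec P g₂ → Exec P (Gf.or g₁ g₂)
  | and {P g₁ g₂} : Exec P g₁ → Exec P g₂ → Exec P (Gf.and g₁ g₂)
  | load {P d g} : Exec (insert d P) g → Exec P (Gf.dimp d g)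

/-! ## Formulae of IPL and natural deduction NJ -/

inductive Fml : Type
  | atom : ℕ → Fml
  | bot : Fml
  | and : Fml → Fml → Fml
  | or : Fml → Fml → Fml
  | imp : Fml → Fml → Fml

/-- Gentzen's natural deduction system NJ for IPL. -/
inductive NJ : Set Fml → Fml → Prop
  | ax {Γ φ} : φ ∈ Γ → NJ Γ φ
  | andI {Γ φ ψ} : NJ Γ φ → NJ Γ ψ → NJ Γ (Fml.and φ ψ)
  | andE1 {Γ φ ψ} : NJ Γ (Fml.and φ ψ) → NJ Γ φ
  | andE2 {Γ φ ψ} : NJ Γ (Fml.and φ ψ) → NJ Γ ψ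
  | orI1 {Γ φ ψ} : NJ Γ φ → NJ Γ (Fml.or φ ψ)
  | orI2 {Γ φ ψ} : NJ Γ ψ → NJ Γ (Fml.or φ ψ)
  | orE {Γ φ ψ χ} : NJ Γ (Fml.or φ ψ) → NJ (insert φ Γ) χ → NJ (insert ψ Γ) χ → NJ Γ χ
  | impI {Γ φ ψ} : NJ (insert φ Γ) ψ → NJ Γ (Fml.imp φ ψ)
  | impE {Γ φ ψ} : NJ Γ (Fml.imp φ ψ) → NJ Γ φ → NJ Γ ψ
  | botE {Γ φ} : NJ Γ Fml.bot → NJ Γ φ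

def Atm.toFml : Atm → Fml
  | Atm.bot => Fml.bot
  | Atm.at_ n => Fml.atom n

mutual
  def Df.toFml : Df → Fml
    | Df.atom a => a.toFml
    | Df.imp g a => Fml.imp g.toFml a.toFml
    | Df.and d₁ d₂ => Fml.and d₁.toFml d₂.toFml
  def Gf.toFml : Gf → Fml
    | Gf.atom a => a.toFml
    | Gf.dimp d g => Fml.imp d.toFml g.toFml
    | Gf.and g₁ g₂ => Fml.and g₁.toFml g₂.toFml
    | Gf.or g₁ g₂ => Fml.or g₁.toFml g₂.toFml
end

/-! ## Base-extension semantics -/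

/-- A (properly second-level) atomic rule: premisses are pairs of a finite set of
dischargeable atoms and an atomic conclusion; the conclusion is an atom. -/
structure ARule where
  prems : List (Finset ℕ × ℕ)
  concl : ℕ

/-- Derivability of an atom from a set of atoms in an atomic system. -/
inductive Deriv (B : Set ARule) : Set ℕ → ℕ → Prop
  | hyp {S p} : p ∈ S → Deriv B S p
  | app {S} {r : ARule} : r ∈ B →
      (∀ pr ∈ r.prems, Deriv B (S ∪ ↑pr.1) pr.2) → Deriv B S r.concl

/-- Sandqvist's support relation `⊩_B φ` (over the basis of all second-level
atomic systems). -/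
def Supp : Set ARule → Fml → Prop
  | B, Fml.atom n => Deriv B ∅ n
  | B, Fml.bot => ∀ n : ℕ, Deriv B ∅ n
  | B, Fml.and φ ψ => Supp B φ ∧ Supp B ψ
  | B, Fml.imp φ ψ => ∀ C, B ⊆ C → Supp C φ → Supp C ψ
  | B, Fml.or φ ψ => ∀ C, B ⊆ C → ∀ p : ℕ,
      (∀ D, C ⊆ D → Supp D φ → Deriv D ∅ p) →
      (∀ D, C ⊆ D → Supp D ψ → Deriv D ∅ p) → Deriv C ∅ p

/-- Support with open assumptions: `Γ ⊩_B φ`. -/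
def SuppCtx (B : Set ARule) (Γ : Set Fml) (φ : Fml) : Prop :=
  ∀ C, B ⊆ C → (∀ ψ ∈ Γ, Supp C ψ) → Supp C φ

/-! ## The bespoke base `N` -/

/-- Atoms occurring in a formula. -/
def atomsIn : Fml → Set ℕ
  | Fml.atom n => {n}
  | Fml.bot => ∅
  | Fml.and φ ψ => atomsIn φ ∪ atomsIn ψ
  | Fml.or φ ψ => atomsIn φ ∪ atomsIn ψ
  | Fml.imp φ ψ => atomsIn φ ∪ atomsIn ψ

/-- A flattening map `♭` is good for a set `S` of formulae if it is injective,
the identity on atoms, and assigns fresh atoms to non-atomic formulae of `S`. -/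
def FlatGood (fl : Fml → ℕ) (S : Set Fml) : Prop :=
  Function.Injective fl ∧ (∀ n, fl (Fml.atom n) = n) ∧
  (∀ φ ∈ S, (∀ n, φ ≠ Fml.atom n) → ∀ ψ ∈ S, fl φ ∉ atomsIn ψ)

/-- `S` is closed under subformulae. -/
def SubClosed (S : Set Fml) : Prop :=
  (∀ φ ψ, Fml.and φ ψ ∈ S → φ ∈ S ∧ ψ ∈ S) ∧
  (∀ φ ψ, Fml.or φ ψ ∈ S → φ ∈ S ∧ ψ ∈ S) ∧
  (∀ φ ψ, Fml.imp φ ψ ∈ S → φ ∈ S ∧ ψ ∈ S)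

/-- The rules of the bespoke base `N` emulating NJ via flattened atoms, for the
formulae occurring in `S`. -/
inductive NRule (fl : Fml → ℕ) (S : Set Fml) : ARule → Prop
  | andI {φ ψ} : Fml.and φ ψ ∈ S →
      NRule fl S ⟨[(∅, fl φ), (∅, fl ψ)], fl (Fml.and φ ψ)⟩
  | andE1 {φ ψ} : Fml.and φ ψ ∈ S →
      NRule fl S ⟨[(∅, fl (Fml.and φ ψ))], fl φ⟩
  | andE2 {φ ψ} : Fml.and φ ψ ∈ S →
      NRule fl S ⟨[(∅, fl (Fml.and φ ψ))], fl ψ⟩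
  | orI1 {φ ψ} : Fml.or φ ψ ∈ S →
      NRule fl S ⟨[(∅, fl φ)], fl (Fml.or φ ψ)⟩
  | orI2 {φ ψ} : Fml.or φ ψ ∈ S →
      NRule fl S ⟨[(∅, fl ψ)], fl (Fml.or φ ψ)⟩
  | orE {φ ψ χ} : Fml.or φ ψ ∈ S → χ ∈ S →
      NRule fl S ⟨[(∅, fl (Fml.or φ ψ)), ({fl φ}, fl χ), ({fl ψ}, fl χ)], fl χ⟩
  | impI {φ ψ} : Fml.imp φ ψ ∈ S →
      NRule fl S ⟨[({fl φ}, fl ψ)], fl (Fml.imp φ ψ)⟩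
  | impE {φ ψ} : Fml.imp φ ψ ∈ S →
      NRule fl S ⟨[(∅, fl φ), (∅, fl (Fml.imp φ ψ))], fl ψ⟩
  | botE {φ} : φ ∈ S →
      NRule fl S ⟨[(∅, fl Fml.bot)], fl φ⟩

/-! ## Encoding atomic systems as formulae / programs -/

def conjAtoms : ℕ → List ℕ → Fml
  | a, [] => Fml.atom a
  | a, b :: l => Fml.and (Fml.atom a) (conjAtoms b l)

noncomputable def encPrem (pr : Finset ℕ × ℕ) : Fml :=
  match pr.1.toList with
  | [] => Fml.atom pr.2
  | a :: l => Fml.imp (conjAtoms a l) (Fml.atom pr.2)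

def conjFrm : Fml → List Fml → Fml
  | f, [] => f
  | f, g :: l => Fml.and f (conjFrm g l)

/-- Encoding `⌊-⌋` of a second-level atomic rule as a formula of IPL. -/
noncomputable def encRule (r : ARule) : Fml :=
  match r.prems with
  | [] => Fml.atom r.concl
  | q :: qs => Fml.imp (conjFrm (encPrem q) (qs.map encPrem)) (Fml.atom r.concl)

def conjD : Df → List Df → Df
  | d, [] => d
  | d, e :: l => Df.and d (conjD e l)

def conjG : Gf → List Gf → Gf
  | g, [] => g
  | g, h :: l => Gf.and g (conjG h l)

noncomputable def encPremG (pr : Finset ℕ × ℕ) : Gf :=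
  match pr.1.toList with
  | [] => Gf.atom (Atm.at_ pr.2)
  | a :: l =>
      Gf.dimp (conjD (Df.atom (Atm.at_ a)) (l.map fun n => Df.atom (Atm.at_ n)))
        (Gf.atom (Atm.at_ pr.2))

/-- Encoding of a second-level atomic rule as a definite formula. -/
noncomputable def encRuleD (r : ARule) : Df :=
  match r.prems with
  | [] => Df.atom (Atm.at_ r.concl)
  | q :: qs => Df.imp (conjG (encPremG q) (qs.map encPremG)) (Atm.at_ r.concl)

/-!
Sandqvist's argument. Fix a subformula-closed set `S` and a flattening `♭ : Fml → ℕ` that is the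
identity on atoms and injective on `S`. The base `N` has one atomic rule for each NJ rule instance
on `S`, with formulae replaced by their flat atoms. By induction on `ψ ∈ S`, support of `ψ` in any
extension of `N` is derivability of the atom `ψ♭` there. So `⊩ φ` yields an atomic derivation of
`φ♭` in `N`; reading atoms back through a left inverse of `♭` turns every rule of `N` into the NJ
rule it copies, and the derivation into an NJ derivation of `φ`. The paper reaches `⊢ φ` from
`⊩_N φ` through `N` read as a logic program; here the atomic derivation in `N` is decoded directly.
-/

inductive Subformula : Fml → Fml → Prop
  | refl (φ : Fml) : Subformula φ φ
  | and_left {ψ α β : Fml} : Subformula ψ α → Subformula ψ (Fml.and α β)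
  | and_right {ψ α β : Fml} : Subformula ψ β → Subformula ψ (Fml.and α β)
  | or_left {ψ α β : Fml} : Subformula ψ α → Subformula ψ (Fml.or α β)
  | or_right {ψ α β : Fml} : Subformula ψ β → Subformula ψ (Fml.or α β)
  | imp_left {ψ α β : Fml} : Subformula ψ α → Subformula ψ (Fml.imp α β)
  | imp_right {ψ α β : Fml} : Subformula ψ β → Subformula ψ (Fml.imp α β)

theorem Subformula.trans {χ ψ φ : Fml} (h₁ : Subformula χ ψ) (h₂ : Subformula ψ φ) :
    Subformula χ φ := by
  induction h₂ with
  | refl => exact h₁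
  | and_left _ ih => exact and_left ih
  | and_right _ ih => exact and_right ih
  | or_left _ ih => exact or_left ih
  | or_right _ ih => exact or_right ih
  | imp_left _ ih => exact imp_left ih
  | imp_right _ ih => exact imp_right ih

theorem subClosed_subformulas (φ : Fml) : SubClosed {ψ | Subformula ψ φ} :=
  ⟨fun _ _ h => ⟨(Subformula.and_left (.refl _)).trans h, (Subformula.and_right (.refl _)).trans h⟩,
   fun _ _ h => ⟨(Subformula.or_left (.refl _)).trans h, (Subformula.or_right (.refl _)).trans h⟩,
   fun _ _ h => ⟨(Subformula.imp_left (.refl _)).trans h, (Subformula.imp_right (.refl _)).trans h⟩⟩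

def Fml.code : Fml → ℕ
  | Fml.atom n => Nat.pair 0 n
  | Fml.bot => Nat.pair 1 0
  | Fml.and α β => Nat.pair 2 (Nat.pair α.code β.code)
  | Fml.or α β => Nat.pair 3 (Nat.pair α.code β.code)
  | Fml.imp α β => Nat.pair 4 (Nat.pair α.code β.code)

theorem Fml.code_injective : Function.Injective Fml.code := by
  intro φ
  induction φ <;> intro ψ h <;> cases ψ <;> grind [code, Nat.pair_eq_pair]

def Fml.atomBound : Fml → ℕ
  | Fml.atom n => n + 1
  | Fml.bot => 0
  | Fml.and α β => max α.atomBound β.atomBound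
  | Fml.or α β => max α.atomBound β.atomBound
  | Fml.imp α β => max α.atomBound β.atomBound

theorem Subformula.lt_atomBound {n : ℕ} {φ : Fml} (h : Subformula (Fml.atom n) φ) :
    n < φ.atomBound := by
  induction h <;> simp_all [Fml.atomBound]

def flat (φ ψ : Fml) : ℕ :=
  match ψ with
  | Fml.atom n => n
  | _ => φ.atomBound + ψ.code

theorem flat_eq_of_ne_atom {φ ψ : Fml} (h : ∀ n, ψ ≠ Fml.atom n) :
    flat φ ψ = φ.atomBound + ψ.code := by
  cases ψ with
  | atom n => exact absurd rfl (h n)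
  | _ => rfl

theorem flat_injOn (φ : Fml) : Set.InjOn (flat φ) {ψ | Subformula ψ φ} := by
  have key : ∀ n ψ, Subformula (Fml.atom n) φ → (∀ m, ψ ≠ Fml.atom m) → flat φ ψ ≠ n :=
    fun n ψ hn hψ => by have := hn.lt_atomBound; rw [flat_eq_of_ne_atom hψ]; omega
  intro ψ hψ ξ hξ h
  by_cases hψa : ∃ n, ψ = Fml.atom n <;> by_cases hξa : ∃ n, ξ = Fml.atom n
  · obtain ⟨n, rfl⟩ := hψa; obtain ⟨m, rfl⟩ := hξa; exact congrArg _ h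
  · obtain ⟨n, rfl⟩ := hψa; exact absurd h.symm (key n ξ hψ (by simpa using hξa))
  · obtain ⟨m, rfl⟩ := hξa; exact absurd h (key m ψ hξ (by simpa using hψa))
  · simp only [not_exists] at hψa hξa
    rw [flat_eq_of_ne_atom hψa, flat_eq_of_ne_atom hξa] at h
    exact Fml.code_injective (by omega)

namespace Deriv

variable {B C : Set ARule} {S S' : Set ℕ} {p : ℕ}

theorem mono_base (hBC : B ⊆ C) (h : Deriv B S p) : Deriv C S p := by
  induction h with
  | hyp hp => exact hyp hp
  | app hr _ ih => exact app (hBC hr) ih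

theorem mono_hyp (hSS' : S ⊆ S') (h : Deriv B S p) : Deriv B S' p := by
  induction h generalizing S' with
  | hyp hp => exact hyp (hSS' hp)
  | app hr _ ih => exact app hr fun pr hpr => ih pr hpr (Set.union_subset_union_left _ hSS')

def fact (a : ℕ) : ARule := ⟨[], a⟩

theorem of_fact (a : ℕ) : Deriv (insert (fact a) B) S a :=
  app (r := fact a) (Set.mem_insert _ _) (by simp [fact])

theorem discharge_fact {a : ℕ} (h : Deriv (insert (fact a) B) S p) : Deriv B (S ∪ {a}) p := by
  induction h with
  | hyp hp => exact hyp (Or.inl hp)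
  | app hr _ ih =>
    rcases hr with rfl | hr
    · exact hyp (Or.inr rfl)
    · refine app hr fun pr hpr => mono_hyp ?_ (ih pr hpr)
      rw [Set.union_right_comm]

end Deriv

section Emulation

variable (fl : Fml → ℕ) (S : Set Fml)

/-- `orE` and `botE` conclude an arbitrary atom `p`: support of `∨` and `⊥` quantifies over all
atoms. -/
inductive emulationBase : Set ARule
  | andI {α β : Fml} : Fml.and α β ∈ S →
      emulationBase ⟨[(∅, fl α), (∅, fl β)], fl (Fml.and α β)⟩
  | andE1 {α β : Fml} : Fml.and α β ∈ S →
      emulationBase ⟨[(∅, fl (Fml.and α β))], fl α⟩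
  | andE2 {α β : Fml} : Fml.and α β ∈ S →
      emulationBase ⟨[(∅, fl (Fml.and α β))], fl β⟩
  | orI1 {α β : Fml} : Fml.or α β ∈ S →
      emulationBase ⟨[(∅, fl α)], fl (Fml.or α β)⟩
  | orI2 {α β : Fml} : Fml.or α β ∈ S →
      emulationBase ⟨[(∅, fl β)], fl (Fml.or α β)⟩
  | orE {α β : Fml} (p : ℕ) : Fml.or α β ∈ S →
      emulationBase ⟨[(∅, fl (Fml.or α β)), ({fl α}, p), ({fl β}, p)], p⟩
  | impI {α β : Fml} : Fml.imp α β ∈ S →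
      emulationBase ⟨[({fl α}, fl β)], fl (Fml.imp α β)⟩
  | impE {α β : Fml} : Fml.imp α β ∈ S →
      emulationBase ⟨[(∅, fl α), (∅, fl (Fml.imp α β))], fl β⟩
  | botE (p : ℕ) : Fml.bot ∈ S →
      emulationBase ⟨[(∅, fl Fml.bot)], p⟩

def Emulates (B : Set ARule) (ψ : Fml) : Prop :=
  ∀ C, B ⊆ C → (Supp C ψ ↔ Deriv C ∅ (fl ψ))

variable {fl S} {B C : Set ARule}

theorem emulates_atom (hfl : ∀ n, fl (Fml.atom n) = n) (n : ℕ) : Emulates fl B (Fml.atom n) :=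
  fun _ _ => by rw [hfl]; rfl

/-- A hypothetical `α` is emulated by adding `α♭` as a fact and discharging it afterwards. -/
theorem Emulates.deriv_of_supp_imp {α : Fml} {p : ℕ} (hα : Emulates fl B α) (hC : B ⊆ C)
    (h : ∀ D, C ⊆ D → Supp D α → Deriv D ∅ p) : Deriv C {fl α} p := by
  have hext : C ⊆ insert (Deriv.fact (fl α)) C := Set.subset_insert _ _
  have hsupp := (hα _ (hC.trans hext)).2 (Deriv.of_fact _)
  simpa using (h _ hext hsupp).discharge_fact

theorem emulates_bot (hS : Fml.bot ∈ S) : Emulates fl (emulationBase fl S) Fml.bot := by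
  refine fun C hC => ⟨fun h => h (fl Fml.bot), fun h n => ?_⟩
  exact .app (hC (.botE n hS)) (by simpa using h)

theorem emulates_and {α β : Fml} (hS : Fml.and α β ∈ S) (hα : Emulates fl (emulationBase fl S) α)
    (hβ : Emulates fl (emulationBase fl S) β) :
    Emulates fl (emulationBase fl S) (Fml.and α β) := by
  intro C hC
  constructor
  · rintro ⟨h₁, h₂⟩
    exact .app (hC (.andI hS)) (by simp [(hα C hC).1 h₁, (hβ C hC).1 h₂])
  · intro h
    exact ⟨(hα C hC).2 (.app (hC (.andE1 hS)) (by simpa using h)),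
      (hβ C hC).2 (.app (hC (.andE2 hS)) (by simpa using h))⟩

theorem emulates_or {α β : Fml} (hS : Fml.or α β ∈ S) (hα : Emulates fl (emulationBase fl S) α)
    (hβ : Emulates fl (emulationBase fl S) β) :
    Emulates fl (emulationBase fl S) (Fml.or α β) := by
  intro C hC
  constructor
  · intro h
    refine h C le_rfl _ (fun D hCD hD => ?_) (fun D hCD hD => ?_)
    · exact .app (hC.trans hCD (.orI1 hS)) (by simpa using (hα D (hC.trans hCD)).1 hD)
    · exact .app (hC.trans hCD (.orI2 hS)) (by simpa using (hβ D (hC.trans hCD)).1 hD)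
  · intro h D hCD p hpα hpβ
    have hD := hC.trans hCD
    refine .app (hD (.orE p hS)) ?_
    simp [h.mono_base hCD, hα.deriv_of_supp_imp hD hpα, hβ.deriv_of_supp_imp hD hpβ]

theorem emulates_imp {α β : Fml} (hS : Fml.imp α β ∈ S) (hα : Emulates fl (emulationBase fl S) α)
    (hβ : Emulates fl (emulationBase fl S) β) :
    Emulates fl (emulationBase fl S) (Fml.imp α β) := by
  intro C hC
  constructor
  · intro h
    have hαβ := hα.deriv_of_supp_imp hC fun D hCD hD => (hβ D (hC.trans hCD)).1 (h D hCD hD)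
    exact .app (hC (.impI hS)) (by simpa using hαβ)
  · intro h D hCD hD
    refine (hβ D (hC.trans hCD)).2 (.app (hC.trans hCD (.impE hS)) ?_)
    simp [(hα D (hC.trans hCD)).1 hD, h.mono_base hCD]

theorem emulates_of_mem (hfl : ∀ n, fl (Fml.atom n) = n) (hS : SubClosed S) {ψ : Fml}
    (hψ : ψ ∈ S) : Emulates fl (emulationBase fl S) ψ := by
  obtain ⟨hand, hor, himp⟩ := hS
  induction ψ with
  | atom n => exact emulates_atom hfl n
  | bot => exact emulates_bot hψ
  | and α β ihα ihβ => exact emulates_and hψ (ihα (hand _ _ hψ).1) (ihβ (hand _ _ hψ).2)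
  | or α β ihα ihβ => exact emulates_or hψ (ihα (hor _ _ hψ).1) (ihβ (hor _ _ hψ).2)
  | imp α β ihα ihβ => exact emulates_imp hψ (ihα (himp _ _ hψ).1) (ihβ (himp _ _ hψ).2)

end Emulation

def ARule.NJSound (dec : ℕ → Fml) (r : ARule) : Prop :=
  ∀ Γ, (∀ pr ∈ r.prems, NJ (Γ ∪ dec '' ↑pr.1) (dec pr.2)) → NJ Γ (dec r.concl)

theorem Deriv.nj_image {dec : ℕ → Fml} {B : Set ARule} (hB : ∀ r ∈ B, r.NJSound dec)
    {A : Set ℕ} {p : ℕ} (h : Deriv B A p) : NJ (dec '' A) (dec p) := by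
  induction h with
  | hyp hp => exact .ax ⟨_, hp, rfl⟩
  | app hr _ ih => exact hB _ hr _ fun pr hpr => by simpa [Set.image_union] using ih pr hpr

theorem emulationBase_njSound {fl : Fml → ℕ} {S : Set Fml} {dec : ℕ → Fml} (hS : SubClosed S)
    (hdec : Set.LeftInvOn dec fl S) : ∀ r ∈ emulationBase fl S, r.NJSound dec := by
  obtain ⟨hand, hor, himp⟩ := hS
  intro r hr Γ h
  cases hr <;>
    simp only [List.mem_cons, List.not_mem_nil, or_false, forall_eq_or_imp, forall_eq,
      Finset.coe_empty, Finset.coe_singleton, Set.image_empty, Set.image_singleton,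
      Set.union_empty, Set.union_singleton] at h ⊢
  case andI hs =>
    rw [hdec hs, hdec (hand _ _ hs).1, hdec (hand _ _ hs).2] at *
    exact .andI h.1 h.2
  case andE1 hs =>
    rw [hdec hs, hdec (hand _ _ hs).1] at *
    exact .andE1 h
  case andE2 hs =>
    rw [hdec hs, hdec (hand _ _ hs).2] at *
    exact .andE2 h
  case orI1 hs =>
    rw [hdec hs, hdec (hor _ _ hs).1] at *
    exact .orI1 h
  case orI2 hs =>
    rw [hdec hs, hdec (hor _ _ hs).2] at *
    exact .orI2 h
  case orE hs =>
    rw [hdec hs, hdec (hor _ _ hs).1, hdec (hor _ _ hs).2] at h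
    exact .orE h.1 h.2.1 h.2.2
  case impI hs =>
    rw [hdec hs, hdec (himp _ _ hs).1, hdec (himp _ _ hs).2] at *
    exact .impI h
  case impE hs =>
    rw [hdec hs, hdec (himp _ _ hs).1, hdec (himp _ _ hs).2] at *
    exact .impE h.2 h.1
  case botE hs =>
    rw [hdec hs] at h
    exact .botE h

instance : Nonempty Fml := ⟨Fml.bot⟩

/-- completeness via logic programming: if `⊩ φ` (φ is
supported in every base of the Sandqvist basis) then `⊢ φ` in NJ. -/
theorem completeness_via_LP (φ : Fml) (h : ∀ B : Set ARule, Supp B φ) :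
    NJ ∅ φ := by
  have hφ : Subformula φ φ := .refl φ
  have hS := subClosed_subformulas φ
  have hdec := (flat_injOn φ).leftInvOn_invFunOn
  have hderiv : Deriv (emulationBase (flat φ) _) ∅ (flat φ φ) :=
    (emulates_of_mem (fun _ => rfl) hS hφ _ le_rfl).1 (h _)
  simpa [hdec hφ] using hderiv.nj_image (emulationBase_njSound hS hdec)
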